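/- arXiv:1307.2604 — 9 statements merged into one kernel-verified Lean document; each statement's English description precedes it below -/
import Mathlib

section
/- If f : ℝ → [0,∞) has a closed graph and the graph of f is connected, then f is continuous. -/
/-!
A connected graph forces the intermediate value property: if `f x < c < f y` and `f` missed
the level `c` over `[[x, y]]`, the graph would split into the part lying left of that segment
or below the level `c` and the part lying right of it or above. A closed graph makes every level
set `{x | f x = c}` closed, so near a point `a` with `f a < c` the level `c` is avoided on an
order-connected neighbourhood; by the intermediate value property `f` stays below `c` there.
Hence `f` is both upper and lower semicontinuous.
-/

open Set Filter Topology Interval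

section

variable {α β : Type*} [LinearOrder α] [TopologicalSpace α] [LinearOrder β] [TopologicalSpace β]

theorem exists_Icc_eq_of_isPreconnected_graph_of_lt [OrderClosedTopology α]
    [OrderClosedTopology β] {f : α → β} (hconn : IsPreconnected {p : α × β | p.2 = f p.1})
    {x y : α} {c : β} (hxy : x < y) (hxc : f x < c) (hcy : c < f y) :
    ∃ z ∈ Icc x y, f z = c := by
  by_contra! hmiss
  let U : Set (α × β) := {p | p.1 < x ∨ (p.1 < y ∧ p.2 < c)}
  let V : Set (α × β) := {p | y < p.1 ∨ (x < p.1 ∧ c < p.2)}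
  have hU : IsOpen U :=
    (isOpen_lt continuous_fst continuous_const).union
      ((isOpen_lt continuous_fst continuous_const).inter (isOpen_lt continuous_snd continuous_const))
  have hV : IsOpen V :=
    (isOpen_lt continuous_const continuous_fst).union
      ((isOpen_lt continuous_const continuous_fst).inter (isOpen_lt continuous_const continuous_snd))
  have hcover : {p : α × β | p.2 = f p.1} ⊆ U ∪ V := by
    rintro ⟨z, _⟩ (rfl : _ = f z)
    rcases lt_or_ge z x with hzx | hxz
    · exact .inl (.inl hzx)
    rcases lt_or_ge y z with hyz | hzy
    · exact .inr (.inl hyz)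
    rcases (hmiss z ⟨hxz, hzy⟩).lt_or_gt with hzc | hcz
    · have hzy' : z < y := hzy.lt_of_ne (by rintro rfl; exact hzc.not_gt hcy)
      exact .inl (.inr ⟨hzy', hzc⟩)
    · have hxz' : x < z := hxz.lt_of_ne (by rintro rfl; exact hcz.not_gt hxc)
      exact .inr (.inr ⟨hxz', hcz⟩)
  obtain ⟨p, -, hpU, hpV⟩ := hconn U V hU hV hcover
    ⟨(x, f x), rfl, .inr ⟨hxy, hxc⟩⟩ ⟨(y, f y), rfl, .inr ⟨hxy, hcy⟩⟩
  rcases hpU with h | ⟨h, h'⟩ <;> rcases hpV with g | ⟨g, g'⟩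
  exacts [(h.trans (hxy.trans g)).false, (h.trans g).false, (h.trans g).false, (h'.trans g').false]

theorem exists_uIcc_eq_of_isPreconnected_graph [OrderClosedTopology α] [OrderClosedTopology β]
    {f : α → β} (hconn : IsPreconnected {p : α × β | p.2 = f p.1})
    {x y : α} {c : β} (hxc : f x < c) (hcy : c < f y) :
    ∃ z ∈ [[x, y]], f z = c := by
  rcases lt_trichotomy x y with hxy | rfl | hyx
  · obtain ⟨z, hz, hfz⟩ := exists_Icc_eq_of_isPreconnected_graph_of_lt hconn hxy hxc hcy
    exact ⟨z, Icc_subset_uIcc hz, hfz⟩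
  · exact (hxc.trans hcy).false.elim
  · -- Over `βᵒᵈ` the graph is the same subset of the same space, now going down from `y` to `x`.
    obtain ⟨z, hz, hfz⟩ := exists_Icc_eq_of_isPreconnected_graph_of_lt
      (β := βᵒᵈ) (f := fun a ↦ OrderDual.toDual (f a)) hconn hyx hcy hxc
    exact ⟨z, Icc_subset_uIcc' hz, hfz⟩

theorem eventually_lt_of_isClosed_graph_of_isPreconnected_graph [OrderTopology α]
    [OrderClosedTopology β] {f : α → β} (hclosed : IsClosed {p : α × β | p.2 = f p.1})
    (hconn : IsPreconnected {p : α × β | p.2 = f p.1}) {a : α} {c : β} (hac : f a < c) :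
    ∀ᶠ x in 𝓝 a, f x < c := by
  have hlevel : IsClosed {x | c = f x} :=
    hclosed.preimage (continuous_id.prodMk continuous_const)
  have hnhds : ordConnectedComponent {x | c ≠ f x} a ∈ 𝓝 a :=
    ordConnectedComponent_mem_nhds.2 (hlevel.isOpen_compl.mem_nhds hac.ne')
  filter_upwards [hnhds] with x hx
  have hsub : [[a, x]] ⊆ {x | c ≠ f x} := mem_ordConnectedComponent.1 hx
  by_contra! hcx
  have hcx' : c < f x := hcx.lt_of_ne (hsub right_mem_uIcc)
  obtain ⟨z, hz, hfz⟩ := exists_uIcc_eq_of_isPreconnected_graph hconn hac hcx'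
  exact hsub hz hfz.symm

theorem continuous_of_isClosed_graph_of_isPreconnected_graph [OrderTopology α] [OrderTopology β]
    {f : α → β} (hclosed : IsClosed {p : α × β | p.2 = f p.1})
    (hconn : IsPreconnected {p : α × β | p.2 = f p.1}) : Continuous f := by
  refine continuous_iff_continuousAt.2 fun a ↦ tendsto_order.2 ⟨fun c hca ↦ ?_, fun c hac ↦
    eventually_lt_of_isClosed_graph_of_isPreconnected_graph hclosed hconn hac⟩
  exact eventually_lt_of_isClosed_graph_of_isPreconnected_graph
    (β := βᵒᵈ) (f := fun a ↦ OrderDual.toDual (f a)) hclosed hconn hca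

end

theorem closed_connected_graph_real_line_continuous_general
    (f : ℝ → ℝ)
    (hclosed : IsClosed {p : ℝ × ℝ | p.2 = f p.1})
    (hconn : IsConnected {p : ℝ × ℝ | p.2 = f p.1}) :
    Continuous f :=
  continuous_of_isClosed_graph_of_isPreconnected_graph hclosed hconn.isPreconnected

theorem closed_connected_graph_real_line_continuous
    (f : ℝ → ℝ) (hnonneg : ∀ x, 0 ≤ f x)
    (hclosed : IsClosed {p : ℝ × ℝ | p.2 = f p.1})
    (hconn : IsConnected {p : ℝ × ℝ | p.2 = f p.1}) :
    Continuous f :=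
  closed_connected_graph_real_line_continuous_general f hclosed hconn
end

section
/- If X is a Baire Hausdorff space, Y is a σ-locally compact space, and f : X → Y has a closed graph, then the set C(f) of continuity points of f is an open dense subset of X. -/
/-!
With a closed graph, `f x` is the only possible cluster value of `f` at `x`. Hence `f` is
continuous at every point near which it takes values in a fixed compact set `K`, and each
preimage `f ⁻¹' K` of a compact set is closed. Local compactness of `Y` then makes the continuity
points open; covering `Y` by countably many compact sets `Kₙ`, the Baire property makes
`⋃ n, interior (f ⁻¹' Kₙ)` dense, and it consists of continuity points.
-/

open Filter Set Topology

section ClosedGraph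

variable {X Y : Type*} [TopologicalSpace X] [TopologicalSpace Y] {f : X → Y}

theorem eq_of_mapClusterPt_of_isClosed_graph (hf : IsClosed {p : X × Y | p.2 = f p.1})
    {l : Filter X} {x : X} {y : Y} (hl : l ≤ 𝓝 x) (hy : MapClusterPt y l f) : y = f x := by
  have hgraph : MapClusterPt (x, y) l fun z ↦ (z, f z) := by
    rw [((𝓝 x).basis_sets.prod_nhds (𝓝 y).basis_sets).mapClusterPt_iff_frequently]
    rintro ⟨s, t⟩ ⟨hs, ht⟩
    exact ((hy.frequently ht).and_eventually (hl hs)).mono fun z hz ↦ ⟨hz.2, hz.1⟩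
  exact hf.mem_of_mapClusterPt hgraph (Eventually.of_forall fun _ ↦ rfl)

theorem continuousAt_of_isClosed_graph_of_eventually_mem
    (hf : IsClosed {p : X × Y | p.2 = f p.1}) {K : Set Y} (hK : IsCompact K) {x : X}
    (hx : ∀ᶠ z in 𝓝 x, f z ∈ K) : ContinuousAt f x :=
  hK.tendsto_nhds_of_unique_mapClusterPt hx fun _ _ ↦
    eq_of_mapClusterPt_of_isClosed_graph hf le_rfl

theorem isClosed_preimage_of_isClosed_graph (hf : IsClosed {p : X × Y | p.2 = f p.1})
    {K : Set Y} (hK : IsCompact K) : IsClosed (f ⁻¹' K) := by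
  refine isClosed_iff_clusterPt.2 fun x hx ↦ ?_
  have : (𝓝[f ⁻¹' K] x).NeBot := hx
  obtain ⟨y, hyK, hy⟩ := hK.exists_mapClusterPt (f := 𝓝[f ⁻¹' K] x) (u := f)
    (tendsto_principal.2 self_mem_nhdsWithin)
  rwa [eq_of_mapClusterPt_of_isClosed_graph hf nhdsWithin_le_nhds hy] at hyK

theorem interior_preimage_subset_continuousAt (hf : IsClosed {p : X × Y | p.2 = f p.1})
    {K : Set Y} (hK : IsCompact K) : interior (f ⁻¹' K) ⊆ {x | ContinuousAt f x} :=
  fun _ hx ↦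
    continuousAt_of_isClosed_graph_of_eventually_mem hf hK (mem_interior_iff_mem_nhds.1 hx)

theorem isOpen_setOf_continuousAt_of_isClosed_graph [WeaklyLocallyCompactSpace Y]
    (hf : IsClosed {p : X × Y | p.2 = f p.1}) : IsOpen {x | ContinuousAt f x} := by
  refine isOpen_iff_mem_nhds.2 fun x hx ↦ ?_
  obtain ⟨K, hK, hKx⟩ := exists_compact_mem_nhds (f x)
  exact mem_of_superset (interior_mem_nhds.2 (hx hKx))
    (interior_preimage_subset_continuousAt hf hK)

theorem dense_setOf_continuousAt_of_isClosed_graph [BaireSpace X] [SigmaCompactSpace Y]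
    (hf : IsClosed {p : X × Y | p.2 = f p.1}) : Dense {x | ContinuousAt f x} := by
  have hcover : ⋃ n, f ⁻¹' compactCovering Y n = univ := by
    rw [← preimage_iUnion, iUnion_compactCovering, preimage_univ]
  have hclosed n : IsClosed (f ⁻¹' compactCovering Y n) :=
    isClosed_preimage_of_isClosed_graph hf (isCompact_compactCovering Y n)
  exact (dense_iUnion_interior_of_closed hclosed hcover).mono <| iUnion_subset fun n ↦
    interior_preimage_subset_continuousAt hf (isCompact_compactCovering Y n)

end ClosedGraph

theorem closed_graph_continuity_points_open_dense_general
    {X Y : Type*} [TopologicalSpace X] [BaireSpace X]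
    [TopologicalSpace Y] [LocallyCompactSpace Y] [SigmaCompactSpace Y]
    (f : X → Y) (hf : IsClosed {p : X × Y | p.2 = f p.1}) :
    IsOpen {x : X | ContinuousAt f x} ∧ Dense {x : X | ContinuousAt f x} :=
  ⟨isOpen_setOf_continuousAt_of_isClosed_graph hf,
    dense_setOf_continuousAt_of_isClosed_graph hf⟩

theorem closed_graph_continuity_points_open_dense
    {X Y : Type*} [TopologicalSpace X] [BaireSpace X] [T2Space X]
    [TopologicalSpace Y] [LocallyCompactSpace Y] [SigmaCompactSpace Y]
    (f : X → Y) (hf : IsClosed {p : X × Y | p.2 = f p.1}) :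
    IsOpen {x : X | ContinuousAt f x} ∧ Dense {x : X | ContinuousAt f x} :=
  closed_graph_continuity_points_open_dense_general f hf
end

section
/- Let B be the open unit ball in ℝⁿ, x a point of its boundary, and V an open set containing x. Then x is locally connectedly accessible from A = V ∩ B. -/
/-!
Local connected accessibility only depends on `A` near `x`, so it survives intersecting `A` with
an open neighbourhood of `x`. For the convex ball `B`, every neighbourhood of `x` contains an open
convex one `G`; then `G ∩ B` is convex, hence connected, and is a connecting set for any two of
its points.
-/

/-- `x` is locally connectedly accessible from `A`. -/
def LocConnAccess {X : Type*} [TopologicalSpace X] (A : Set X) (x : X) : Prop :=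
  ∀ U : Set X, IsOpen U → x ∈ U → ∃ G : Set X, IsOpen G ∧ x ∈ G ∧ G ⊆ U ∧
    ∀ u ∈ G ∩ A, ∀ v ∈ G ∩ A, ∃ E : Set X, IsConnected E ∧ u ∈ E ∧ v ∈ E ∧ E ⊆ U ∩ A

open Set

namespace LocConnAccess

variable {X : Type*} [TopologicalSpace X] {A : Set X} {x : X}

theorem of_isPreconnected_inter
    (h : ∀ U, IsOpen U → x ∈ U → ∃ G, IsOpen G ∧ x ∈ G ∧ G ⊆ U ∧ IsPreconnected (G ∩ A)) :
    LocConnAccess A x := by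
  intro U hU hxU
  obtain ⟨G, hG, hxG, hGU, hconn⟩ := h U hU hxU
  refine ⟨G, hG, hxG, hGU, fun u hu v hv => ⟨G ∩ A, ⟨⟨u, hu⟩, hconn⟩, hu, hv, ?_⟩⟩
  exact inter_subset_inter_left A hGU

theorem open_inter (h : LocConnAccess A x) {V : Set X} (hV : IsOpen V) (hxV : x ∈ V) :
    LocConnAccess (V ∩ A) x := by
  intro U hU hxU
  obtain ⟨G, hG, hxG, hGUV, hconn⟩ := h (U ∩ V) (hU.inter hV) ⟨hxU, hxV⟩
  refine ⟨G, hG, hxG, hGUV.trans inter_subset_left, ?_⟩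
  rintro u ⟨huG, huA⟩ v ⟨hvG, hvA⟩
  obtain ⟨E, hE, huE, hvE, hEUA⟩ := hconn u ⟨huG, huA.2⟩ v ⟨hvG, hvA.2⟩
  exact ⟨E, hE, huE, hvE, fun y hy => ⟨(hEUA hy).1.1, (hEUA hy).1.2, (hEUA hy).2⟩⟩

end LocConnAccess

theorem Convex.locConnAccess {E : Type*} [AddCommGroup E] [Module ℝ E] [TopologicalSpace E]
    [IsTopologicalAddGroup E] [ContinuousSMul ℝ E] [LocallyConvexSpace ℝ E]
    {C : Set E} (hC : Convex ℝ C) (x : E) : LocConnAccess C x := by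
  refine LocConnAccess.of_isPreconnected_inter fun U hU hxU => ?_
  obtain ⟨S, ⟨hS, hSconv⟩, hSU⟩ :=
    (LocallyConvexSpace.convex_basis (𝕜 := ℝ) x).mem_iff.mp (hU.mem_nhds hxU)
  exact ⟨interior S, isOpen_interior, mem_interior_iff_mem_nhds.mpr hS,
    interior_subset.trans hSU, (hSconv.interior.inter hC).isPreconnected⟩

theorem boundary_point_locConnAccess_ball_general
    (n : ℕ) (x : EuclideanSpace ℝ (Fin n))
    (V : Set (EuclideanSpace ℝ (Fin n))) (hV : IsOpen V) (hxV : x ∈ V) :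
    LocConnAccess (V ∩ Metric.ball (0 : EuclideanSpace ℝ (Fin n)) 1) x :=
  ((convex_ball 0 1).locConnAccess x).open_inter hV hxV

theorem boundary_point_locConnAccess_ball
    (n : ℕ) (x : EuclideanSpace ℝ (Fin n))
    (hx : x ∈ frontier (Metric.ball (0 : EuclideanSpace ℝ (Fin n)) 1))
    (V : Set (EuclideanSpace ℝ (Fin n))) (hV : IsOpen V) (hxV : x ∈ V) :
    LocConnAccess (V ∩ Metric.ball (0 : EuclideanSpace ℝ (Fin n)) 1) x :=
  boundary_point_locConnAccess_ball_general n x V hV hxV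
end

section
/- If f : X → [0,∞) has a closed graph, A ⊆ C(f), x is locally connectedly accessible from A, and x ∈ A^f_∞, then f(u) tends to +∞ as u tends to x within A. -/
/-!
Suppose `f` does not tend to `+∞` along `A` at `x`, so `f ≤ M` at points of `A` arbitrarily
close to `x`, while `x ∈ A^f_∞` gives points of `A` arbitrarily close to `x` with `f > c` for
every `c > 0`. Local connected accessibility joins such a low and a high point by a connected
subset of `A` inside any given neighbourhood, on which `f` is continuous; by the intermediate
value theorem `f` takes the value `c` there. Hence every `c > max M 0` is attained arbitrarily
close to `x`, and the closed graph forces `f x = c` for all of them, which is absurd.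
-/

open Filter

/-- `AInf f A` is the set `A^f_∞`. -/
def AInf {X : Type*} [TopologicalSpace X] (f : X → ℝ) (A : Set X) : Set X :=
  {x ∈ closure A | ∀ M > (0 : ℝ), ∀ U : Set X, IsOpen U → x ∈ U → ∃ y ∈ U ∩ A, f y > M}

open Topology

theorem eq_of_isClosed_graph_of_frequently_eq {X Y : Type*} [TopologicalSpace X]
    [TopologicalSpace Y] {f : X → Y} (hclosed : IsClosed {p : X × Y | p.2 = f p.1}) {x : X}
    {c : Y} (h : ∃ᶠ z in 𝓝 x, f z = c) : f x = c :=
  (hclosed.mem_of_frequently_of_tendsto (h.mono fun _ hz => hz.symm)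
    (tendsto_id.prodMk_nhds (tendsto_const_nhds (x := c)))).symm

theorem LocConnAccess.frequently_eq {X α : Type*} [TopologicalSpace X] [LinearOrder α]
    [TopologicalSpace α] [OrderClosedTopology α] {A : Set X} {x : X} {f : X → α} {c : α}
    (hacc : LocConnAccess A x) (hA : A ⊆ {x | ContinuousAt f x})
    (hlow : ∃ᶠ u in 𝓝[A] x, f u ≤ c) (hhigh : ∃ᶠ u in 𝓝[A] x, c ≤ f u) :
    ∃ᶠ z in 𝓝[A] x, f z = c := by
  simp only [frequently_nhdsWithin_iff, frequently_nhds_iff] at hlow hhigh ⊢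
  intro U hxU hU
  obtain ⟨G, hG, hxG, hGU, hGconn⟩ := hacc U hU hxU
  obtain ⟨u, huG, hu, huA⟩ := hlow G hxG hG
  obtain ⟨v, hvG, hv, hvA⟩ := hhigh G hxG hG
  obtain ⟨E, hE, huE, hvE, hEUA⟩ := hGconn u ⟨huG, huA⟩ v ⟨hvG, hvA⟩
  have hfE : ContinuousOn f E := fun z hz => (hA (hEUA hz).2).continuousWithinAt
  obtain ⟨z, hzE, hz⟩ := hE.isPreconnected.intermediate_value huE hvE hfE ⟨hu, hv⟩
  exact ⟨z, (hEUA hzE).1, hz, (hEUA hzE).2⟩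

theorem frequently_lt_of_mem_AInf {X : Type*} [TopologicalSpace X] {f : X → ℝ} {A : Set X}
    {x : X} (hx : x ∈ AInf f A) {c : ℝ} (hc : 0 < c) : ∃ᶠ u in 𝓝[A] x, c < f u := by
  simp only [frequently_nhdsWithin_iff, frequently_nhds_iff]
  intro U hxU hU
  obtain ⟨y, ⟨hyU, hyA⟩, hy⟩ := hx.2 c hc U hU hxU
  exact ⟨y, hyU, hy, hyA⟩

theorem exploding_limit_general
    {X : Type*} [TopologicalSpace X] (f : X → ℝ)
    (hclosed : IsClosed {p : X × ℝ | p.2 = f p.1}) (A : Set X)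
    (hA : A ⊆ {x | ContinuousAt f x}) (x : X)
    (hacc : LocConnAccess A x) (hxinf : x ∈ AInf f A) :
    Tendsto f (nhdsWithin x A) atTop := by
  by_contra hnot
  obtain ⟨M, hM⟩ : ∃ M, ∃ᶠ u in 𝓝[A] x, f u < M := by
    simpa only [tendsto_atTop, not_forall, not_eventually, not_le] using hnot
  have hvalue : ∀ c, max M 0 < c → f x = c := by
    intro c hc
    have hlow : ∃ᶠ u in 𝓝[A] x, f u ≤ c :=
      hM.mono fun _ hu => (hu.trans_le (le_max_left M 0)).le.trans hc.le
    have hhigh : ∃ᶠ u in 𝓝[A] x, c ≤ f u :=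
      (frequently_lt_of_mem_AInf hxinf ((le_max_right M 0).trans_lt hc)).mono fun _ hu => hu.le
    exact eq_of_isClosed_graph_of_frequently_eq hclosed <|
      (hacc.frequently_eq hA hlow hhigh).filter_mono nhdsWithin_le_nhds
  linarith [hvalue (max M 0 + 1) (by linarith), hvalue (max M 0 + 2) (by linarith)]

theorem exploding_limit
    {X : Type*} [TopologicalSpace X] (f : X → ℝ) (hnonneg : ∀ x, 0 ≤ f x)
    (hclosed : IsClosed {p : X × ℝ | p.2 = f p.1}) (A : Set X)
    (hA : A ⊆ {x | ContinuousAt f x}) (x : X)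
    (hacc : LocConnAccess A x) (hxinf : x ∈ AInf f A) :
    Tendsto f (nhdsWithin x A) atTop :=
  exploding_limit_general f hclosed A hA x hacc hxinf
end

section
/- If X is a topological space and A, B ⊆ X are both closed and locally connected, then A ∪ B is locally connected. -/
/-!
Near a point of `A ∩ B`, the union of a connected neighbourhood of it in `A` and one in `B` is a
connected neighbourhood in `A ∪ B`. Near a point of `A \ B`, closedness of `B` makes
`𝓝[A ∪ B] x = 𝓝[A] x`, so connected neighbourhoods in `A` already serve.
-/

open Filter Set Topology

section

variable {X : Type*} [TopologicalSpace X]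

/-- Local connectedness of the subspace `S` at `x`, read in the ambient space. -/
def LocallyConnectedWithinAt (S : Set X) (x : X) : Prop :=
  ∀ U ∈ 𝓝[S] x, ∃ V ∈ 𝓝[S] x, V ⊆ U ∩ S ∧ IsPreconnected V

theorem locallyConnectedSpace_subtype_iff {S : Set X} :
    LocallyConnectedSpace S ↔ ∀ x ∈ S, LocallyConnectedWithinAt S x := by
  rw [locallyConnectedSpace_iff_connected_subsets, Subtype.forall]
  refine forall₂_congr fun x hx => ⟨fun h U hU => ?_, fun h U hU => ?_⟩
  · obtain ⟨V, hV, hVconn, hVU⟩ := h _ (preimage_coe_mem_nhds_subtype.mpr hU)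
    refine ⟨(↑) '' V, mem_nhds_subtype_iff_nhdsWithin.mp hV, ?_,
      IsInducing.subtypeVal.isPreconnected_image.mpr hVconn⟩
    exact (image_mono hVU).trans ((Subtype.image_preimage_coe S U).trans (inter_comm S U)).subset
  · obtain ⟨V, hV, hVU, hVconn⟩ := h _ (mem_nhds_subtype_iff_nhdsWithin.mp hU)
    refine ⟨(↑) ⁻¹' V, preimage_coe_mem_nhds_subtype.mpr hV, ?_, ?_⟩
    · rw [← IsInducing.subtypeVal.isPreconnected_image, Subtype.image_preimage_coe,
        inter_eq_right.mpr (hVU.trans inter_subset_right)]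
      exact hVconn
    · exact (preimage_mono (hVU.trans inter_subset_left)).trans
        (preimage_image_eq U Subtype.val_injective).subset

namespace LocallyConnectedWithinAt

variable {S T : Set X} {x : X}

theorem union_of_notMem_closure (hS : LocallyConnectedWithinAt S x) (hx : x ∉ closure T) :
    LocallyConnectedWithinAt (S ∪ T) x := by
  have hST : 𝓝[S ∪ T] x = 𝓝[S] x := by
    rw [nhdsWithin_union, notMem_closure_iff_nhdsWithin_eq_bot.mp hx, sup_bot_eq]
  intro U hU
  rw [hST] at hU ⊢
  obtain ⟨V, hV, hVU, hVconn⟩ := hS U hU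
  exact ⟨V, hV, hVU.trans (inter_subset_inter_right U subset_union_left), hVconn⟩

theorem union (hS : LocallyConnectedWithinAt S x) (hT : LocallyConnectedWithinAt T x)
    (hxS : x ∈ S) (hxT : x ∈ T) : LocallyConnectedWithinAt (S ∪ T) x := by
  intro U hU
  rw [nhdsWithin_union, mem_sup] at hU
  obtain ⟨V, hV, hVU, hVconn⟩ := hS U hU.1
  obtain ⟨W, hW, hWU, hWconn⟩ := hT U hU.2
  refine ⟨V ∪ W, nhdsWithin_union x S T ▸ union_mem_sup hV hW, ?_, ?_⟩
  · rw [inter_union_distrib_left]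
    exact union_subset_union hVU hWU
  · exact hVconn.union x (mem_of_mem_nhdsWithin hxS hV) (mem_of_mem_nhdsWithin hxT hW) hWconn

end LocallyConnectedWithinAt

end

theorem union_closed_locallyConnected
    {X : Type*} [TopologicalSpace X] (A B : Set X)
    (hA : IsClosed A) (hB : IsClosed B)
    (hAl : LocallyConnectedSpace A) (hBl : LocallyConnectedSpace B) :
    LocallyConnectedSpace ↥(A ∪ B) := by
  rw [locallyConnectedSpace_subtype_iff] at hAl hBl ⊢
  intro x hx
  by_cases hxA : x ∈ A <;> by_cases hxB : x ∈ B
  · exact (hAl x hxA).union (hBl x hxB) hxA hxB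
  · exact (hAl x hxA).union_of_notMem_closure (by rwa [hB.closure_eq])
  · rw [union_comm]
    exact (hBl x hxB).union_of_notMem_closure (by rwa [hA.closure_eq])
  · exact (hx.elim hxA hxB).elim
end

section
/- If X is a topological space, A ⊆ X is closed and locally arcwise-connected, E ⊆ X is closed, and ∂E is locally arcwise-connected, then (A ∩ E) ∪ ∂E is locally arcwise-connected. Moreover, if A and ∂E are connected, neither is separated by any point, and |A ∩ ∂E| ≥ 2, then (A ∩ E) ∪ ∂E is arcwise-connected and is not separated by any point. -/
open Set

/-- A subset `S` is not separated by any point: removing any single point leaves it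
connected. -/
def NotSeparatedByAnyPoint {X : Type*} [TopologicalSpace X] (S : Set X) : Prop :=
  ∀ p : X, IsPreconnected (S \ {p})

/-!
Near a point of the interior of `E` the set `(A ∩ E) ∪ ∂E` coincides with `A`, and near a point
off the closed set `A` it coincides with `∂E`; so only the points of `A ∩ ∂E` need an argument.
There the two pieces are glued: a path in `A` from a point of `E` to a point of `∂E`, stopped
when it first leaves the interior of `E`, is a path in `A ∩ E` ending on `∂E`, from where it
continues inside `∂E`. The same gluing gives global path-connectedness, and its analogue for
preconnected sets, applied to `A \ {p}` and `∂E \ {p}`, gives non-separation.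
-/

open Topology Filter

section

variable {X : Type*} [TopologicalSpace X]

theorem JoinedIn.exists_mem_frontier_joinedIn_inter {E Z : Set X} {q x : X} (hE : IsClosed E)
    (hq : q ∈ E) (hx : x ∉ interior E) (h : JoinedIn Z q x) :
    ∃ r ∈ frontier E, JoinedIn (Z ∩ E) q r := by
  obtain ⟨γ, hγZ⟩ := h
  obtain ⟨t, ht, ht_least⟩ : ∃ t, IsLeast (γ ⁻¹' (interior E)ᶜ) t :=
    (isOpen_interior.isClosed_compl.preimage γ.continuous).isCompact.exists_isLeast
      ⟨1, by simpa using hx⟩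
  have hbefore : ∀ s < t, γ s ∈ interior E := fun s hs => by
    by_contra h
    exact (ht_least h).not_gt hs
  have hγE : ∀ s ∈ Icc 0 t, γ s ∈ E := by
    rintro s ⟨-, hst⟩
    rcases hst.lt_or_eq with hst | rfl
    · exact interior_subset (hbefore s hst)
    rcases eq_or_ne s 0 with rfl | hs0
    · simpa using hq
    · have hs : s ∈ closure (Iio s) := by
        rw [closure_Iio' ⟨0, pos_iff_ne_zero.mpr hs0⟩]
        exact mem_Iic.mpr le_rfl
      exact hE.closure_eq ▸ map_mem_closure γ.continuous hs
        fun s' hs' => interior_subset (hbefore s' hs')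
  have h0t : (0 : unitInterval) ≤ t := unitInterval.nonneg'
  refine ⟨γ t, hE.frontier_eq ▸ ⟨hγE t ⟨h0t, le_rfl⟩, ht⟩, ?_⟩
  have hsub : JoinedIn (Z ∩ E) (γ 0) (γ t) := ⟨γ.subpath 0 t, fun s => by
    obtain ⟨s', hs', hs's⟩ : γ.subpath 0 t s ∈ γ '' Icc 0 t :=
      γ.range_subpath_of_le 0 t h0t ▸ mem_range_self s
    exact hs's ▸ ⟨hγZ s', hγE s' hs'⟩⟩
  rwa [γ.source] at hsub

theorem IsPathConnected.inter_union_of_subset_frontier {E W V : Set X} (hE : IsClosed E)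
    (hW : IsPathConnected W) (hV : IsPathConnected V) (hVE : V ⊆ frontier E)
    (hWV : W ∩ frontier E ⊆ V) (hne : (W ∩ V).Nonempty) : IsPathConnected ((W ∩ E) ∪ V) := by
  obtain ⟨p, hpW, hpV⟩ := hne
  refine ⟨p, Or.inr hpV, ?_⟩
  rintro y (⟨hyW, hyE⟩ | hyV)
  · obtain ⟨r, hr, hyr⟩ :=
      (hW.joinedIn y hyW p hpW).exists_mem_frontier_joinedIn_inter hE hyE (hVE hpV).2
    have hrp : JoinedIn V r p := hV.joinedIn r (hWV ⟨hyr.target_mem.1, hr⟩) p hpV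
    exact ((hyr.mono subset_union_left).trans (hrp.mono subset_union_right)).symm
  · exact (hV.joinedIn p hpV y hyV).mono subset_union_right

theorem IsPreconnected.inter_union {E A D : Set X} (hE : IsClosed E)
    (hA : IsPreconnected A) (hD : IsPreconnected D)
    (hAD : A ∩ frontier E ⊆ D) (hne : (A ∩ D).Nonempty) : IsPreconnected ((A ∩ E) ∪ D) := by
  rw [isPreconnected_iff_subset_of_disjoint] at hA hD ⊢
  obtain ⟨c, hcA, hcD⟩ := hne
  have key : ∀ u v, IsOpen u → IsOpen v → (A ∩ E) ∪ D ⊆ u ∪ v →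
      ((A ∩ E) ∪ D) ∩ (u ∩ v) = ∅ → D ⊆ u → (A ∩ E) ∪ D ⊆ u := by
    intro u v hu hv hcov hdisj hDu
    have huv : ∀ w ∈ (A ∩ E) ∪ D, w ∈ u → w ∉ v := fun w hw hwu hwv =>
      (hdisj.subset ⟨hw, hwu, hwv⟩ : w ∈ (∅ : Set X))
    -- a point of `A ∩ v` on `∂E` would lie in `D ⊆ u`
    have hcovA : A ⊆ (Eᶜ ∪ u) ∪ (v ∩ interior E) := by
      intro w hwA
      by_cases hwE : w ∈ E
      · rcases hcov (Or.inl ⟨hwA, hwE⟩) with hwu | hwv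
        · exact Or.inl (Or.inr hwu)
        by_cases hwi : w ∈ interior E
        · exact Or.inr ⟨hwv, hwi⟩
        · have hwD : w ∈ D := hAD ⟨hwA, hE.frontier_eq ▸ ⟨hwE, hwi⟩⟩
          exact absurd hwv (huv w (Or.inr hwD) (hDu hwD))
      · exact Or.inl (Or.inl hwE)
    have hdisjA : A ∩ ((Eᶜ ∪ u) ∩ (v ∩ interior E)) = ∅ := by
      refine eq_empty_of_forall_notMem fun w ⟨hwA, hwu, hwv, hwi⟩ => ?_
      have hwE : w ∈ E := interior_subset hwi
      exact huv w (Or.inl ⟨hwA, hwE⟩) (hwu.resolve_left (not_not_intro hwE)) hwv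
    rcases hA _ _ (hE.isOpen_compl.union hu) (hv.inter isOpen_interior) hcovA hdisjA with h | h
    · exact union_subset (fun w hw => (h hw.1).resolve_left (not_not_intro hw.2)) hDu
    · exact absurd (h hcA).1 (huv c (Or.inr hcD) (hDu hcD))
  intro u v hu hv hcov hdisj
  rcases hD u v hu hv (subset_union_right.trans hcov) (eq_empty_of_subset_empty
    (hdisj ▸ inter_subset_inter_left _ subset_union_right)) with hDu | hDv
  · exact Or.inl (key u v hu hv hcov hdisj hDu)
  · exact Or.inr (key v u hv hu (union_comm u v ▸ hcov) (inter_comm u v ▸ hdisj) hDv)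

theorem IsConnected.isPathConnected_of_locallyPathConnectedSpace {S : Set X}
    [LocallyPathConnectedSpace S] (h : IsConnected S) : IsPathConnected S :=
  isPathConnected_iff_pathConnectedSpace.mpr <|
    pathConnectedSpace_iff_connectedSpace.mpr (isConnected_iff_connectedSpace.mp h)

def LocallyPathConnectedWithinAt (S : Set X) (p : X) : Prop :=
  ∀ U ∈ 𝓝 p, ∃ W ∈ 𝓝[S] p, W ⊆ S ∩ U ∧ IsPathConnected W

theorem locallyPathConnectedSpace_subtype_iff {S : Set X} :
    LocallyPathConnectedSpace S ↔ ∀ p ∈ S, LocallyPathConnectedWithinAt S p := by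
  constructor
  · intro _ p hp U hU
    set x : S := ⟨p, hp⟩
    have hxU : Subtype.val ⁻¹' U ∈ 𝓝 x := continuous_subtype_val.continuousAt.preimage_mem_nhds hU
    refine ⟨Subtype.val '' pathComponentIn (Subtype.val ⁻¹' U) x,
      mem_nhds_subtype_iff_nhdsWithin.mp (pathComponentIn_mem_nhds hxU), ?_,
      (isPathConnected_pathComponentIn (mem_of_mem_nhds hxU)).image continuous_subtype_val⟩
    rintro _ ⟨y, hy, rfl⟩
    exact ⟨y.2, (pathComponentIn_subset hy : y ∈ Subtype.val ⁻¹' U)⟩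
  · intro h
    refine ⟨fun x => hasBasis_self.mpr fun t ht => ?_⟩
    obtain ⟨U, hU, hUt⟩ := mem_nhdsWithin_iff_exists_mem_nhds_inter.mp
      (mem_nhds_subtype_iff_nhdsWithin.mp ht)
    obtain ⟨W, hW, hWU, hWpc⟩ := h x x.2 U hU
    refine ⟨Subtype.val ⁻¹' W, ?_, ?_, fun y hy => ?_⟩
    · rwa [mem_nhds_subtype_iff_nhdsWithin, Subtype.image_preimage_coe,
        inter_eq_right.mpr (hWU.trans inter_subset_left)]
    · rwa [IsInducing.subtypeVal.isPathConnected_iff, Subtype.image_preimage_coe,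
        inter_eq_right.mpr (hWU.trans inter_subset_left)]
    · obtain ⟨hyS, hyU⟩ := hWU hy
      exact Subtype.val_injective.mem_set_image.mp (hUt ⟨hyU, hyS⟩)

theorem LocallyPathConnectedWithinAt.congr_set {S T : Set X} {p : X}
    (h : LocallyPathConnectedWithinAt S p) (hST : S =ᶠ[𝓝 p] T) :
    LocallyPathConnectedWithinAt T p := by
  intro U hU
  obtain ⟨W, hW, hWU, hWpc⟩ :=
    h (U ∩ {y | y ∈ S ↔ y ∈ T}) (inter_mem hU (eventuallyEq_set.mp hST))
  refine ⟨W, nhdsWithin_eq_iff_eventuallyEq.mpr hST ▸ hW, fun y hy => ?_, hWpc⟩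
  obtain ⟨hyS, hyU, hyST⟩ := hWU hy
  exact ⟨hyST.mp hyS, hyU⟩

theorem LocallyPathConnectedWithinAt.inter_union_frontier {A E : Set X} {p : X}
    (hE : IsClosed E) (hA : LocallyPathConnectedWithinAt A p)
    (hF : LocallyPathConnectedWithinAt (frontier E) p) (hp : p ∈ A ∩ frontier E) :
    LocallyPathConnectedWithinAt ((A ∩ E) ∪ frontier E) p := by
  intro U hU
  obtain ⟨V, hV, hVU, hVpc⟩ := hF U hU
  obtain ⟨O, hO, hOV⟩ := mem_nhdsWithin_iff_exists_mem_nhds_inter.mp hV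
  obtain ⟨W, hW, hWU, hWpc⟩ := hA (U ∩ O) (inter_mem hU hO)
  refine ⟨(W ∩ E) ∪ V, ?_, ?_, hWpc.inter_union_of_subset_frontier hE hVpc
    (hVU.trans inter_subset_left) (fun y ⟨hyW, hyF⟩ => hOV ⟨(hWU hyW).2.2, hyF⟩)
    ⟨p, mem_of_mem_nhdsWithin hp.1 hW, mem_of_mem_nhdsWithin hp.2 hV⟩⟩
  · rw [nhdsWithin_union]
    exact union_mem_sup (inter_mem (nhdsWithin_mono _ inter_subset_left hW)
      (nhdsWithin_mono _ inter_subset_right self_mem_nhdsWithin)) hV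
  · rintro y (⟨hyW, hyE⟩ | hyV)
    · exact ⟨Or.inl ⟨(hWU hyW).1, hyE⟩, (hWU hyW).2.1⟩
    · exact ⟨Or.inr (hVU hyV).1, (hVU hyV).2⟩

theorem inter_union_frontier_eventuallyEq_of_mem_interior {A E : Set X} {p : X}
    (hp : p ∈ interior E) : ((A ∩ E) ∪ frontier E : Set X) =ᶠ[𝓝 p] A :=
  eventuallyEq_set.mpr <| mem_of_superset (isOpen_interior.mem_nhds hp) fun _ hy =>
    ⟨fun h => h.elim (·.1) fun h' => absurd hy h'.2, fun h => Or.inl ⟨h, interior_subset hy⟩⟩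

theorem inter_union_frontier_eventuallyEq_of_notMem {A E : Set X} {p : X} (hA : IsClosed A)
    (hp : p ∉ A) : ((A ∩ E) ∪ frontier E : Set X) =ᶠ[𝓝 p] frontier E :=
  eventuallyEq_set.mpr <| mem_of_superset (hA.isOpen_compl.mem_nhds hp) fun _ hy =>
    ⟨fun h => h.resolve_left fun h' => hy h'.1, Or.inr⟩

end

theorem inter_union_frontier_locPathConnected
    {X : Type*} [TopologicalSpace X] (A E : Set X)
    (hA : IsClosed A) (hAl : LocPathConnectedSpace A)
    (hE : IsClosed E) (hfl : LocPathConnectedSpace ↥(frontier E)) :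
    LocPathConnectedSpace ↥((A ∩ E) ∪ frontier E) ∧
    (IsConnected A → IsConnected (frontier E) →
      NotSeparatedByAnyPoint A → NotSeparatedByAnyPoint (frontier E) →
      (A ∩ frontier E).Nontrivial →
      IsPathConnected ((A ∩ E) ∪ frontier E) ∧
        NotSeparatedByAnyPoint ((A ∩ E) ∪ frontier E)) := by
  have hAl' := locallyPathConnectedSpace_subtype_iff.mp hAl
  have hfl' := locallyPathConnectedSpace_subtype_iff.mp hfl
  refine ⟨locallyPathConnectedSpace_subtype_iff.mpr fun p hp => ?_,
    fun hAc hfc hAns hfns hnt => ⟨?_, fun p => ?_⟩⟩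
  · by_cases hpi : p ∈ interior E
    · have hpA : p ∈ A := hp.elim (·.1) fun h => absurd hpi h.2
      exact (hAl' p hpA).congr_set (inter_union_frontier_eventuallyEq_of_mem_interior hpi).symm
    have hpF : p ∈ frontier E := hp.elim (fun h => hE.frontier_eq ▸ ⟨h.2, hpi⟩) id
    by_cases hpA : p ∈ A
    · exact (hAl' p hpA).inter_union_frontier hE (hfl' p hpF) ⟨hpA, hpF⟩
    · exact (hfl' p hpF).congr_set (inter_union_frontier_eventuallyEq_of_notMem hA hpA).symm
  · have : LocallyPathConnectedSpace A := hAl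
    have : LocallyPathConnectedSpace (frontier E) := hfl
    exact hAc.isPathConnected_of_locallyPathConnectedSpace.inter_union_of_subset_frontier hE
      hfc.isPathConnected_of_locallyPathConnectedSpace subset_rfl inter_subset_right hnt.nonempty
  · obtain ⟨c, hc, hcp⟩ := hnt.exists_ne p
    rw [union_sdiff_distrib, inter_sdiff_right_comm]
    exact (hAns p).inter_union hE (hfns p) (fun z ⟨⟨_, hzp⟩, hzF⟩ => ⟨hzF, hzp⟩)
      ⟨c, ⟨hc.1, hcp⟩, hc.2, hcp⟩
end

section
/- If C₁, C₂ ⊆ ℝ² are each homeomorphic to the unit circle, C₁ ∩ B(C₂) ≠ ∅, and C₂ ∩ B(C₁) ≠ ∅, then C₁ ∩ C₂ contains at least two points. -/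
open Set

abbrev Plane := EuclideanSpace ℝ (Fin 2)

abbrev unitCircle : Set Plane := Metric.sphere (0 : Plane) 1

/-!
Suppose `C₁ ∩ C₂` has at most one point. A circle minus at most one point is connected, so
`C₁ \ C₂` lies in the component `B₂` of `C₂ᶜ` that it meets, and likewise `C₂ \ C₁ ⊆ B₁`. The
frontier of `B₁ ∪ B₂` lies in `C₁ ∪ C₂` but avoids both differences, hence lies in `C₁ ∩ C₂`.
So `B₁ ∪ B₂` would be a nonempty bounded open set in the plane with countable frontier, which is
impossible since the plane minus a countable set is connected.
-/

open Metric

section Frontier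

variable {E : Type*} [NormedAddCommGroup E] [NormedSpace ℝ E]

theorem not_countable_frontier_of_isOpen_of_isBounded (hE : 1 < Module.rank ℝ E) {V : Set E}
    (hVo : IsOpen V) (hVb : Bornology.IsBounded V) (hVne : V.Nonempty) :
    ¬ (frontier V).Countable := by
  intro hcount
  have : Nontrivial E := rank_pos_iff_nontrivial.mp (zero_lt_one.trans hE)
  have hconn := (hcount.isConnected_compl_of_one_lt_rank hE).isPreconnected
  have hsub : (frontier V)ᶜ ⊆ V := by
    refine hconn.subset_of_closure_inter_subset hVo ?_ ?_
    · obtain ⟨x, hx⟩ := hVne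
      exact ⟨x, fun hfr => hfr.2 (hVo.interior_eq.symm ▸ hx), hx⟩
    · rintro x ⟨hcl, hfr⟩
      by_contra hx
      exact hfr ⟨hcl, hVo.interior_eq.symm ▸ hx⟩
  refine NormedSpace.unbounded_univ ℝ E (hVb.closure.subset fun x _ => ?_)
  by_cases hx : x ∈ frontier V
  · exact frontier_subset_closure hx
  · exact subset_closure (hsub hx)

end Frontier

theorem frontier_connectedComponentIn_compl_subset {X : Type*} [TopologicalSpace X]
    [LocallyConnectedSpace X] {C : Set X} (hC : IsClosed C) (x : X) :
    frontier (connectedComponentIn Cᶜ x) ⊆ C := by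
  intro y hy
  by_contra hyC
  rw [hC.isOpen_compl.connectedComponentIn.frontier_eq] at hy
  obtain ⟨z, hzy, hzx⟩ := mem_closure_iff.mp hy.1 _ hC.isOpen_compl.connectedComponentIn
    (mem_connectedComponentIn hyC)
  exact hy.2 (connectedComponentIn_eq hzx ▸ connectedComponentIn_eq hzy ▸
    mem_connectedComponentIn hyC)

theorem frontier_union_subset_inter {X : Type*} [TopologicalSpace X] {B₁ B₂ C₁ C₂ : Set X}
    (hB₁ : IsOpen B₁) (hB₂ : IsOpen B₂) (hfr₁ : frontier B₁ ⊆ C₁) (hfr₂ : frontier B₂ ⊆ C₂)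
    (h₁ : C₁ \ C₂ ⊆ B₂) (h₂ : C₂ \ C₁ ⊆ B₁) : frontier (B₁ ∪ B₂) ⊆ C₁ ∩ C₂ := by
  intro z hz
  have hzB : z ∉ B₁ ∪ B₂ := by rw [(hB₁.union hB₂).frontier_eq] at hz; exact hz.2
  have hzC : z ∈ C₁ ∪ C₂ :=
    (frontier_union_subset _ _ hz).imp (fun h => hfr₁ h.1) (fun h => hfr₂ h.2)
  by_contra hz₁₂
  rcases hzC with h | h
  · exact hzB (Or.inr (h₁ ⟨h, fun h' => hz₁₂ ⟨h, h'⟩⟩))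
  · exact hzB (Or.inl (h₂ ⟨h, fun h' => hz₁₂ ⟨h', h⟩⟩))

section Sphere

variable {E : Type*} [NormedAddCommGroup E] [InnerProductSpace ℝ E]

theorem isPreconnected_sphere_compl_singleton (p : sphere (0 : E) 1) :
    IsPreconnected ({p}ᶜ : Set (sphere (0 : E) 1)) := by
  have hp : ‖(p : E)‖ = 1 := norm_eq_of_mem_sphere p
  have := (stereographic hp).symm_image_target_eq_source
  rw [stereographic_source, stereographic_target] at this
  rw [← this]
  exact isPreconnected_univ.image _ (stereographic hp).continuousOn_invFun

theorem isPreconnected_sphere_compl_of_subsingleton (hE : 1 < Module.rank ℝ E)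
    {S : Set (sphere (0 : E) 1)} (hS : S.Subsingleton) : IsPreconnected Sᶜ := by
  rcases hS.eq_empty_or_singleton with rfl | ⟨p, rfl⟩
  · have := Subtype.preconnectedSpace (isConnected_sphere hE (0 : E) zero_le_one).isPreconnected
    simp only [compl_empty, isPreconnected_univ]
  · exact isPreconnected_sphere_compl_singleton p

theorem isPreconnected_diff_of_homeomorph_sphere (hE : 1 < Module.rank ℝ E) {X : Type*}
    [TopologicalSpace X] {C : Set X} (e : sphere (0 : E) 1 ≃ₜ C) {S : Set X}
    (hS : S.Subsingleton) : IsPreconnected (C \ S) := by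
  let f : sphere (0 : E) 1 → X := Subtype.val ∘ e
  have hf : range f = C := by
    rw [range_comp, e.surjective.range_eq, image_univ, Subtype.range_coe]
  rw [← hf, ← image_compl_preimage]
  exact (isPreconnected_sphere_compl_of_subsingleton hE
    (hS.preimage (Subtype.val_injective.comp e.injective))).image f
    (continuous_subtype_val.comp e.continuous).continuousOn

end Sphere

theorem one_lt_rank_plane : 1 < Module.rank ℝ Plane := by
  simpa using Module.lt_rank_of_lt_finrank (R := ℝ) (M := Plane)
    (by rw [finrank_euclideanSpace_fin]; norm_num : 1 < Module.finrank ℝ Plane)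

theorem isClosed_of_homeomorph_unitCircle {C : Set Plane} (e : unitCircle ≃ₜ C) : IsClosed C :=
  have : CompactSpace unitCircle := isCompact_iff_compactSpace.mp (isCompact_sphere 0 1)
  (isCompact_iff_compactSpace.mpr e.compactSpace).isClosed

theorem diff_subset_connectedComponentIn_of_inter_subsingleton {C D : Set Plane}
    (e : unitCircle ≃ₜ C) (hCD : (C ∩ D).Subsingleton) {x p : Plane} (hpC : p ∈ C)
    (hpB : p ∈ connectedComponentIn Dᶜ x) : C \ D ⊆ connectedComponentIn Dᶜ x := by
  have hpre : IsPreconnected (C \ D) := by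
    simpa [sdiff_inter_self_eq_sdiff] using
      isPreconnected_diff_of_homeomorph_sphere one_lt_rank_plane e hCD
  rw [connectedComponentIn_eq hpB]
  exact hpre.subset_connectedComponentIn ⟨hpC, connectedComponentIn_subset _ _ hpB⟩
    fun _ hz => hz.2

theorem circles_intersect_in_two_points
    (C₁ C₂ : Set Plane)
    (hC₁ : Nonempty (↥unitCircle ≃ₜ ↥C₁)) (hC₂ : Nonempty (↥unitCircle ≃ₜ ↥C₂))
    (B₁ B₂ : Set Plane)
    (hB₁comp : ∃ x ∈ C₁ᶜ, B₁ = connectedComponentIn C₁ᶜ x)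
    (hB₁bd : Bornology.IsBounded B₁)
    (hB₂comp : ∃ x ∈ C₂ᶜ, B₂ = connectedComponentIn C₂ᶜ x)
    (hB₂bd : Bornology.IsBounded B₂)
    (h₁ : (C₁ ∩ B₂).Nonempty) (h₂ : (C₂ ∩ B₁).Nonempty) :
    (C₁ ∩ C₂).Nontrivial := by
  obtain ⟨e₁⟩ := hC₁
  obtain ⟨e₂⟩ := hC₂
  obtain ⟨x₁, -, rfl⟩ := hB₁comp
  obtain ⟨x₂, -, rfl⟩ := hB₂comp
  obtain ⟨p₁, hp₁C, hp₁B⟩ := h₁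
  obtain ⟨p₂, hp₂C, hp₂B⟩ := h₂
  by_contra hnt
  have hsub : (C₁ ∩ C₂).Subsingleton := not_nontrivial_iff.mp hnt
  have hB₁o := (isClosed_of_homeomorph_unitCircle e₁).isOpen_compl.connectedComponentIn (x := x₁)
  have hB₂o := (isClosed_of_homeomorph_unitCircle e₂).isOpen_compl.connectedComponentIn (x := x₂)
  have hdiff₁ := diff_subset_connectedComponentIn_of_inter_subsingleton e₁ hsub hp₁C hp₁B
  have hdiff₂ := diff_subset_connectedComponentIn_of_inter_subsingleton e₂
    (inter_comm C₁ C₂ ▸ hsub) hp₂C hp₂B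
  have hfr := frontier_union_subset_inter hB₁o hB₂o
    (frontier_connectedComponentIn_compl_subset (isClosed_of_homeomorph_unitCircle e₁) x₁)
    (frontier_connectedComponentIn_compl_subset (isClosed_of_homeomorph_unitCircle e₂) x₂)
    hdiff₁ hdiff₂
  exact not_countable_frontier_of_isOpen_of_isBounded one_lt_rank_plane (hB₁o.union hB₂o)
    (hB₁bd.union hB₂bd) ⟨p₁, Or.inr hp₁B⟩ (hsub.anti hfr).countable
end

section
/- If X is a Hausdorff topological space, Y is a metrisable σ-locally compact space, and f : X → Y has a closed graph, then there exists a function f̂ : X → [0,∞) with a closed graph such that D(f) = D(f̂) and the graph of f̂ is homeomorphic to the graph of f. -/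
/-!
Compose `f` with a continuous proper map `h : Y → [0, ∞)`, built as a locally finite sum of
Urysohn functions along a compact exhaustion of `Y`. The map `id × h` is proper, hence closed,
and injective on the graph of `f`, so it carries that graph homeomorphically onto the graph of
`h ∘ f`, which is therefore closed. A map with closed graph is continuous at every point near
which its values stay in a compact set; continuity of `h ∘ f` at `x` provides such a set,
namely the preimage under `h` of a compact neighbourhood of `h (f x)`.
-/

open Filter Set Topology

theorem image_prodMap_graph {X Y Z : Type*} (f : X → Y) (h : Y → Z) :
    Prod.map id h '' {p : X × Y | p.2 = f p.1} = {p : X × Z | p.2 = h (f p.1)} := by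
  ext p
  constructor
  · rintro ⟨⟨x, y⟩, rfl : y = f x, rfl⟩
    rfl
  · intro hp
    exact ⟨(p.1, f p.1), rfl, Prod.ext rfl hp.symm⟩

theorem injOn_prodMap_graph {X Y Z : Type*} (f : X → Y) (h : Y → Z) :
    InjOn (Prod.map id h) {p : X × Y | p.2 = f p.1} := by
  rintro ⟨x, y⟩ (rfl : y = f x) ⟨x', y'⟩ (rfl : y' = f x') hxx'
  obtain rfl : x = x' := congrArg Prod.fst hxx'
  rfl

section ClosedGraph

variable {X Y : Type*} [TopologicalSpace X] [TopologicalSpace Y] {f : X → Y}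

theorem MapClusterPt.mem_closure_graph {x : X} {y : Y} (hy : MapClusterPt y (𝓝 x) f) :
    (x, y) ∈ closure {p : X × Y | p.2 = f p.1} := by
  refine mem_closure_iff_nhds.2 fun s hs ↦ ?_
  obtain ⟨U, hU, V, hV, hUV⟩ := mem_nhds_prod_iff.1 hs
  obtain ⟨z, hzV, hzU⟩ := ((mapClusterPt_iff_frequently.1 hy V hV).and_eventually hU).exists
  exact ⟨(z, f z), hUV ⟨hzU, hzV⟩, rfl⟩

theorem continuousAt_of_isClosed_graph (hf : IsClosed {p : X × Y | p.2 = f p.1}) {x : X}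
    {K : Set Y} (hK : IsCompact K) (hfK : ∀ᶠ z in 𝓝 x, f z ∈ K) : ContinuousAt f x :=
  hK.tendsto_nhds_of_unique_mapClusterPt hfK fun _ _ hy ↦ hf.closure_subset hy.mem_closure_graph

theorem IsProperMap.continuousAt_comp_iff {Z : Type*} [TopologicalSpace Z]
    [WeaklyLocallyCompactSpace Z] {h : Y → Z} (hh : IsProperMap h)
    (hf : IsClosed {p : X × Y | p.2 = f p.1}) {x : X} :
    ContinuousAt (fun x ↦ h (f x)) x ↔ ContinuousAt f x := by
  refine ⟨fun hhf ↦ ?_, hh.continuous.continuousAt.comp⟩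
  obtain ⟨L, hL, hLx⟩ := exists_compact_mem_nhds (h (f x))
  exact continuousAt_of_isClosed_graph hf (hh.isCompact_preimage hL) (hhf hLx)

end ClosedGraph

theorem IsProperMap.nonempty_homeomorph_image {X Y : Type*} [TopologicalSpace X]
    [TopologicalSpace Y] {f : X → Y} (hf : IsProperMap f) {s : Set X} (hs : IsClosed s)
    (hinj : InjOn f s) : Nonempty (s ≃ₜ f '' s) := by
  have hfs : IsProperMap (s.domRestrict f) := hf.restrict hs
  have hemb := IsClosedEmbedding.of_continuous_injective_isClosedMap hfs.continuous
    hinj.injective hfs.isClosedMap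
  exact ⟨hemb.isEmbedding.toHomeomorph.trans (.setCongr (range_domRestrict f s))⟩

theorem isProperMap_of_isCompact_sublevel {Y : Type*} [TopologicalSpace Y] {h : Y → ℝ}
    (hh : Continuous h) (hsub : ∀ c, IsCompact {y | h y ≤ c}) : IsProperMap h := by
  refine isProperMap_iff_isCompact_preimage.2 ⟨hh, fun L hL ↦ ?_⟩
  obtain ⟨c, hc⟩ := hL.bddAbove
  exact (hsub c).of_isClosed_subset (hL.isClosed.preimage hh) fun y hy ↦ hc hy

theorem exists_isProperMap_nonneg (Y : Type*) [TopologicalSpace Y] [RegularSpace Y]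
    [LocallyCompactSpace Y] [SigmaCompactSpace Y] :
    ∃ h : Y → ℝ, IsProperMap h ∧ ∀ y, 0 ≤ h y := by
  let K := CompactExhaustion.choice Y
  have hbump (n : ℕ) : ∃ u : C(Y, ℝ), EqOn u 0 (K n) ∧ EqOn u 1 (interior (K (n + 1)))ᶜ ∧
      ∀ y, u y ∈ Icc (0 : ℝ) 1 :=
    exists_continuous_zero_one_of_isCompact (K.isCompact n) isOpen_interior.isClosed_compl
      (disjoint_compl_right_iff_subset.2 (K.subset_interior_succ n))
  choose u hu0 hu1 hu01 using hbump
  have hsupp (y : Y) (n : ℕ) (hn : u n y ≠ 0) : n < K.find y := by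
    by_contra! hle
    exact hn (hu0 n (K.subset hle (K.mem_find y)))
  have hlocFin : LocallyFinite fun n ↦ Function.support (u n) := fun y ↦ by
    obtain ⟨m, hm⟩ := K.exists_mem_nhds y
    refine ⟨K m, hm, (finite_Iio m).subset fun n ⟨z, hzu, hzK⟩ ↦ ?_⟩
    exact (hsupp z n hzu).trans_le (K.mem_iff_find_le.1 hzK)
  have hcont : Continuous fun y ↦ ∑ᶠ n, u n y :=
    continuous_finsum (fun n ↦ (u n).continuous) hlocFin
  -- off `K (N + 1)` the first `N + 1` bumps all equal `1`
  have hlarge (N : ℕ) (y : Y) (hy : y ∉ K (N + 1)) : (N : ℝ) + 1 ≤ ∑ᶠ n, u n y := by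
    have hN : N + 1 ≤ K.find y := by
      by_contra! hlt
      exact hy (K.mem_iff_find_le.2 hlt.le)
    rw [finsum_eq_sum_of_support_subset _ (s := Finset.range (K.find y))
      fun n hn ↦ Finset.mem_coe.2 (Finset.mem_range.2 (hsupp y n hn))]
    calc (N : ℝ) + 1 = ∑ n ∈ Finset.range (N + 1), u n y := by
          rw [Finset.sum_congr rfl fun n hn ↦ hu1 n fun hint ↦ hy (K.subset
            (Finset.mem_range.1 hn) (interior_subset hint))]
          simp
      _ ≤ ∑ n ∈ Finset.range (K.find y), u n y :=
          Finset.sum_le_sum_of_subset_of_nonneg (Finset.range_subset_range.2 hN)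
            fun n _ _ ↦ (hu01 n y).1
  refine ⟨fun y ↦ ∑ᶠ n, u n y, isProperMap_of_isCompact_sublevel hcont fun c ↦ ?_,
    fun y ↦ finsum_nonneg fun n ↦ (hu01 n y).1⟩
  obtain ⟨N, hN⟩ := exists_nat_ge c
  refine (K.isCompact (N + 1)).of_isClosed_subset (isClosed_le hcont continuous_const)
    fun y hy ↦ ?_
  by_contra hyK
  linarith [hlarge N y hyK, show ∑ᶠ n, u n y ≤ c from hy]

theorem codomain_reduction_to_halfLine_general
    {X Y : Type*} [TopologicalSpace X]
    [TopologicalSpace Y] [TopologicalSpace.MetrizableSpace Y]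
    [LocallyCompactSpace Y] [SigmaCompactSpace Y]
    (f : X → Y) (hf : IsClosed {p : X × Y | p.2 = f p.1}) :
    ∃ g : X → ℝ, (∀ x, 0 ≤ g x) ∧
      IsClosed {p : X × ℝ | p.2 = g p.1} ∧
      {x : X | ¬ ContinuousAt f x} = {x : X | ¬ ContinuousAt g x} ∧
      Nonempty (↥{p : X × Y | p.2 = f p.1} ≃ₜ ↥{p : X × ℝ | p.2 = g p.1}) := by
  obtain ⟨h, hh, hnonneg⟩ := exists_isProperMap_nonneg Y
  have hΦ : IsProperMap (Prod.map id h : X × Y → X × ℝ) := (isProperMap_id (X := X)).prodMap hh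
  refine ⟨fun x ↦ h (f x), fun x ↦ hnonneg (f x), ?_, ?_, ?_⟩
  · rw [← image_prodMap_graph]
    exact hΦ.isClosedMap _ hf
  · exact Set.ext fun x ↦ not_congr (hh.continuousAt_comp_iff hf).symm
  · rw [← image_prodMap_graph]
    exact hΦ.nonempty_homeomorph_image hf (injOn_prodMap_graph f h)

theorem codomain_reduction_to_halfLine
    {X Y : Type*} [TopologicalSpace X] [T2Space X]
    [TopologicalSpace Y] [TopologicalSpace.MetrizableSpace Y]
    [LocallyCompactSpace Y] [SigmaCompactSpace Y]
    (f : X → Y) (hf : IsClosed {p : X × Y | p.2 = f p.1}) :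
    ∃ g : X → ℝ, (∀ x, 0 ≤ g x) ∧
      IsClosed {p : X × ℝ | p.2 = g p.1} ∧
      {x : X | ¬ ContinuousAt f x} = {x : X | ¬ ContinuousAt g x} ∧
      Nonempty (↥{p : X × Y | p.2 = f p.1} ≃ₜ ↥{p : X × ℝ | p.2 = g p.1}) :=
  codomain_reduction_to_halfLine_general f hf
end

section
/- Let X be a metrisable topological space. Then X is σ-locally compact if and only if there exists a metric on X compatible with its topology for which every closed bounded subset is compact. -/
/-!
Given a compact exhaustion `K n`, Urysohn functions `u n`, equal to `0` on `K n` and `1` off the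
interior of `K (n + 1)`, sum to a continuous exhaustion function `f = ∑ n, u n` with compact
sublevel sets. Pulling a metric `d` back along the graph `x ↦ (x, f x)` gives the compatible metric
`max (d x y) |f x - f y|`, whose closed balls are closed subsets of sublevel sets of `f`.
Conversely, a proper metric space is locally compact and σ-compact.
-/

open Set

theorem CompactExhaustion.exists_continuous_isCompact_preimage_Iic {X : Type*}
    [TopologicalSpace X] [RegularSpace X] [LocallyCompactSpace X] (K : CompactExhaustion X) :
    ∃ f : X → ℝ, Continuous f ∧ ∀ r, IsCompact (f ⁻¹' Iic r) := by
  choose u hu_zero hu_one hu_mem using fun n ↦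
    exists_continuous_zero_one_of_isCompact (K.isCompact n) isOpen_interior.isClosed_compl
      (disjoint_compl_right_iff_subset.2 (K.subset_interior_succ n))
  have hvanish {m n : ℕ} {x : X} (hx : x ∈ K m) (hmn : m ≤ n) : u n x = 0 :=
    hu_zero n (K.subset hmn hx)
  have hsum_eq {m : ℕ} {x : X} (hx : x ∈ K m) : ∑ᶠ n, u n x = ∑ n ∈ Finset.range m, u n x :=
    finsum_eq_sum_of_support_subset _ fun n hn ↦ by
      simpa using fun h ↦ hn (hvanish hx h)
  set f : X → ℝ := fun x ↦ ∑ᶠ n, u n x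
  -- Off `K N` the first `N` Urysohn functions are all `1`.
  have hlower {N : ℕ} {x : X} (hx : x ∉ K N) : (N : ℝ) ≤ f x := by
    obtain ⟨m, hm⟩ := K.exists_mem x
    have hNm : N ≤ m := by
      by_contra! h
      exact hx (K.subset h.le hm)
    calc (N : ℝ) = ∑ n ∈ Finset.range N, u n x := by
          rw [Finset.sum_congr rfl fun n hn ↦ hu_one n fun hx' ↦ hx <|
            K.subset (Finset.mem_range.1 hn) (interior_subset hx')]
          simp
      _ ≤ ∑ n ∈ Finset.range m, u n x :=
          Finset.sum_le_sum_of_subset_of_nonneg (Finset.range_mono hNm)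
            fun n _ _ ↦ (hu_mem n x).1
      _ = f x := (hsum_eq hm).symm
  have hlocFin : LocallyFinite fun n ↦ Function.support (u n) := by
    intro x
    obtain ⟨m, hm⟩ := K.exists_mem_nhds x
    refine ⟨K m, hm, (Set.finite_lt_nat m).subset fun n ⟨y, hy, hyK⟩ ↦ ?_⟩
    by_contra h
    exact hy (hvanish hyK (not_lt.1 h))
  have hf : Continuous f := continuous_finsum (fun n ↦ (u n).continuous) hlocFin
  refine ⟨f, hf, fun r ↦ (K.isCompact (⌈r⌉₊ + 1)).of_isClosed_subset
    (isClosed_Iic.preimage hf) fun x hx ↦ ?_⟩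
  by_contra hxK
  have hle := hlower hxK
  push_cast at hle
  linarith [Nat.le_ceil r, show f x ≤ r from hx]

theorem Metric.properSpace_iff_isCompact_of_isClosed_of_dist_le {X : Type*} [PseudoMetricSpace X] :
    ProperSpace X ↔
      ∀ s : Set X, IsClosed s → (∃ C : ℝ, ∀ x ∈ s, ∀ y ∈ s, dist x y ≤ C) → IsCompact s := by
  simp only [← Metric.isBounded_iff]
  refine ⟨fun _ _ hs hb ↦ Metric.isCompact_of_isClosed_isBounded hs hb, fun h ↦ ⟨fun x r ↦ ?_⟩⟩
  exact h _ Metric.isClosed_closedBall Metric.isBounded_closedBall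

theorem exists_properSpace_metric_of_isCompact_preimage_Iic {X : Type*} [TopologicalSpace X]
    [TopologicalSpace.MetrizableSpace X] {f : X → ℝ} (hf : Continuous f)
    (hproper : ∀ r, IsCompact (f ⁻¹' Iic r)) :
    ∃ m : MetricSpace X, m.toUniformSpace.toTopologicalSpace = ‹_› ∧
      @ProperSpace X m.toPseudoMetricSpace := by
  let := TopologicalSpace.metrizableSpaceMetric X
  let m := (isEmbedding_graph hf).comapMetricSpace fun x ↦ (x, f x)
  refine ⟨m, rfl, ⟨fun x r ↦ (hproper (f x + r)).of_isClosed_subset Metric.isClosed_closedBall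
    fun y hy ↦ ?_⟩⟩
  have hfy : dist (f y) (f x) ≤ r := (le_max_right _ _).trans (Metric.mem_closedBall.1 hy)
  rw [Real.dist_eq] at hfy
  exact sub_le_iff_le_add'.1 (abs_le.1 hfy).2

theorem sigmaLocallyCompact_iff_heineBorel_metric
    {X : Type*} [t : TopologicalSpace X] [TopologicalSpace.MetrizableSpace X] :
    (LocallyCompactSpace X ∧ SigmaCompactSpace X) ↔
      ∃ m : MetricSpace X, m.toUniformSpace.toTopologicalSpace = t ∧
        ∀ s : Set X, IsClosed s →
          (∃ C : ℝ, ∀ x ∈ s, ∀ y ∈ s, m.dist x y ≤ C) → IsCompact s := by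
  constructor
  · rintro ⟨_, _⟩
    obtain ⟨f, hf, hproper⟩ :=
      (CompactExhaustion.choice X).exists_continuous_isCompact_preimage_Iic
    obtain ⟨m, rfl, hm⟩ := exists_properSpace_metric_of_isCompact_preimage_Iic hf hproper
    exact ⟨m, rfl, Metric.properSpace_iff_isCompact_of_isClosed_of_dist_le.1 hm⟩
  · rintro ⟨m, rfl, hHB⟩
    have := Metric.properSpace_iff_isCompact_of_isClosed_of_dist_le.2 hHB
    exact ⟨inferInstance, inferInstance⟩
end
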